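/- A subset A of a topological space X is e*-regular if and only if A = e*-cl(e*-int(A)), if and only if A = e*-int(e*-cl(A)). -/

import Mathlib

open Set Topology

variable {X : Type*} [TopologicalSpace X]

/-- δ-closure of A. -/
def deltaCl (A : Set X) : Set X :=
  {x | ∀ U : Set X, IsOpen U → x ∈ U → (interior (closure U) ∩ A).Nonempty}

/-- A is e*-open if A ⊆ cl(int(δ-cl A)). -/
def EStarOpen (A : Set X) : Prop := A ⊆ closure (interior (deltaCl A))

/-- A is e*-closed if its complement is e*-open. -/
def EStarClosed (A : Set X) : Prop := EStarOpen Aᶜ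

/-- e*-closure: intersection of all e*-closed supersets. -/
def eStarCl (A : Set X) : Set X := ⋂₀ {F | EStarClosed F ∧ A ⊆ F}

/-- e*-interior: union of all e*-open subsets. -/
def eStarInt (A : Set X) : Set X := ⋃₀ {U | EStarOpen U ∧ U ⊆ A}

/-- e*-regular: both e*-open and e*-closed. -/
def EStarRegular (A : Set X) : Prop := EStarOpen A ∧ EStarClosed A

/-- e*-θ-closure. -/
def eStarClTheta (A : Set X) : Set X :=
  {x | ∀ U : Set X, EStarOpen U → x ∈ U → (eStarCl U ∩ A).Nonempty}

/-- e*-θ-closed. -/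
def EStarThetaClosed (A : Set X) : Prop := A = eStarClTheta A

/-- e*-θ-open. -/
def EStarThetaOpen (A : Set X) : Prop := EStarThetaClosed Aᶜ

/-- quasi e*-θ-closed. -/
def QEStarThetaClosed (A : Set X) : Prop :=
  ∀ U : Set X, EStarThetaOpen U → A ⊆ U → eStarClTheta A ⊆ U

/-- e*-θ-kernel. -/
def eStarKerTheta (A : Set X) : Set X := ⋂₀ {U | EStarThetaOpen U ∧ A ⊆ U}

/-! Every closed set is e*-closed, so the closed set cl(int(δ-cl B)) contains the e*-closure of an
e*-open set B; since the e*-open condition is monotone in δ-cl, the e*-closure of an e*-open set is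
again e*-open. Hence if A = e*-cl(e*-int A), then A is e*-closed (as an e*-closure) and e*-open
(as the e*-closure of an e*-open set); the converse is immediate. The second equivalence is the
first one applied to Aᶜ, since complementation swaps e*-int and e*-cl and preserves e*-regularity. -/

lemma subset_deltaCl (A : Set X) : A ⊆ deltaCl A :=
  fun x hx _ hU hxU => ⟨x, interior_maximal subset_closure hU hxU, hx⟩

lemma deltaCl_mono {A B : Set X} (h : A ⊆ B) : deltaCl A ⊆ deltaCl B := by
  intro x hx U hU hxU
  obtain ⟨y, hy, hyA⟩ := hx U hU hxU
  exact ⟨y, hy, h hyA⟩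

lemma closure_interior_deltaCl_mono {A B : Set X} (h : A ⊆ B) :
    closure (interior (deltaCl A)) ⊆ closure (interior (deltaCl B)) :=
  closure_mono (interior_mono (deltaCl_mono h))

lemma IsOpen.eStarOpen {A : Set X} (h : IsOpen A) : EStarOpen A :=
  (interior_maximal (subset_deltaCl A) h).trans subset_closure

lemma IsClosed.eStarClosed {A : Set X} (h : IsClosed A) : EStarClosed A :=
  h.isOpen_compl.eStarOpen

lemma eStarClosed_compl_iff {A : Set X} : EStarClosed Aᶜ ↔ EStarOpen A := by
  rw [EStarClosed, compl_compl]

lemma eStarRegular_compl_iff {A : Set X} : EStarRegular Aᶜ ↔ EStarRegular A := by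
  rw [EStarRegular, EStarRegular, eStarClosed_compl_iff, EStarClosed, and_comm]

lemma eStarOpen_sUnion {S : Set (Set X)} (h : ∀ U ∈ S, EStarOpen U) : EStarOpen (⋃₀ S) := by
  rintro x ⟨U, hU, hxU⟩
  exact closure_interior_deltaCl_mono (subset_sUnion_of_mem hU) (h U hU hxU)

lemma eStarOpen_eStarInt (A : Set X) : EStarOpen (eStarInt A) :=
  eStarOpen_sUnion fun _ hU => hU.1

lemma subset_eStarCl (A : Set X) : A ⊆ eStarCl A :=
  subset_sInter fun _ hF => hF.2

lemma eStarCl_subset {A F : Set X} (hF : EStarClosed F) (hAF : A ⊆ F) : eStarCl A ⊆ F :=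
  sInter_subset_of_mem ⟨hF, hAF⟩

lemma compl_eStarInt (A : Set X) : (eStarInt A)ᶜ = eStarCl Aᶜ := by
  rw [eStarInt, eStarCl, compl_sUnion, compl_image_ofPred]
  congr 1
  ext F
  simp only [mem_ofPred_eq, EStarClosed, compl_subset_comm]

lemma compl_eStarCl (A : Set X) : (eStarCl A)ᶜ = eStarInt Aᶜ := by
  rw [← compl_compl (eStarInt Aᶜ), compl_eStarInt, compl_compl]

lemma eStarClosed_eStarCl (A : Set X) : EStarClosed (eStarCl A) := by
  rw [EStarClosed, compl_eStarCl]
  exact eStarOpen_eStarInt Aᶜ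

lemma EStarOpen.eStarCl {B : Set X} (hB : EStarOpen B) : EStarOpen (eStarCl B) :=
  (eStarCl_subset isClosed_closure.eStarClosed hB).trans
    (closure_interior_deltaCl_mono (subset_eStarCl B))

lemma EStarOpen.eStarInt_eq {A : Set X} (h : EStarOpen A) : eStarInt A = A :=
  subset_antisymm (sUnion_subset fun _ hU => hU.2) (subset_sUnion_of_mem ⟨h, subset_rfl⟩)

lemma EStarClosed.eStarCl_eq {A : Set X} (h : EStarClosed A) : eStarCl A = A :=
  subset_antisymm (eStarCl_subset h subset_rfl) (subset_eStarCl A)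

lemma eStarRegular_iff_eq_eStarCl_eStarInt (A : Set X) :
    EStarRegular A ↔ A = eStarCl (eStarInt A) := by
  refine ⟨fun ⟨hOpen, hClosed⟩ => by rw [hOpen.eStarInt_eq, hClosed.eStarCl_eq], fun h => ?_⟩
  rw [h]
  exact ⟨(eStarOpen_eStarInt A).eStarCl, eStarClosed_eStarCl _⟩

theorem stmt8 (A : Set X) :
    (EStarRegular A ↔ A = eStarCl (eStarInt A)) ∧
    (EStarRegular A ↔ A = eStarInt (eStarCl A)) := by
  refine ⟨eStarRegular_iff_eq_eStarCl_eStarInt A, ?_⟩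
  rw [← eStarRegular_compl_iff, eStarRegular_iff_eq_eStarCl_eStarInt, ← compl_eStarCl,
    ← compl_eStarInt, compl_inj_iff]
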